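/- arXiv:2009.08530 — 2 statements merged into one kernel-verified Lean document; each statement's English description precedes it below -/
import Mathlib

section
/- The space Q = {(x,y) ∈ S¹ × S¹ : |x−y| ≤ 1} is homeomorphic to the cylinder S¹ × [0,1]. -/
/-!
Rotating a pair `(x, y)` of points of `S¹` by `x⁻¹` normalizes it to `(1, y / x)`, and
`‖1 - z‖ ≤ 1` cuts out of the circle exactly the arc `z = exp (θ i)`, `|θ| ≤ π / 3`
(since `‖1 - z‖² = 2 - 2 cos θ`). Hence `(x, θ) ↦ (x, x exp (θ i))` is a continuous bijection
from the compact space `S¹ × [-π/3, π/3]` onto the Hausdorff space `Q`, so a homeomorphism.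
-/

open Complex Real Set

namespace Complex

theorem norm_one_sub_sq_of_norm_eq_one {z : ℂ} (hz : ‖z‖ = 1) : ‖1 - z‖ ^ 2 = 2 - 2 * z.re := by
  rw [Complex.sq_norm, normSq_sub, normSq_one, normSq_eq_norm_sq, hz]
  simp only [one_mul, conj_re]
  ring

theorem norm_one_sub_le_one_iff {z : ℂ} (hz : ‖z‖ = 1) : ‖1 - z‖ ≤ 1 ↔ 1 / 2 ≤ z.re := by
  rw [← sq_le_one_iff₀ (norm_nonneg _), norm_one_sub_sq_of_norm_eq_one hz]
  constructor <;> intro <;> linarith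

theorem arg_exp_mul_I_of_mem_Ioc {θ : ℝ} (hθ : θ ∈ Ioc (-π) π) : arg (exp (θ * I)) = θ := by
  rw [arg_exp_mul_I, toIocMod_eq_self]
  simpa only [two_mul, neg_add_cancel_left] using hθ

end Complex

theorem Real.half_le_cos_iff {θ : ℝ} (hθ : |θ| ≤ π) : 1 / 2 ≤ cos θ ↔ |θ| ≤ π / 3 := by
  rw [← cos_abs, ← cos_pi_div_three]
  exact strictAntiOn_cos.le_iff_ge ⟨by positivity, by linarith [pi_pos]⟩ ⟨abs_nonneg θ, hθ⟩

theorem norm_one_sub_exp_mul_I_le_one_iff {θ : ℝ} (hθ : |θ| ≤ π) :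
    ‖1 - exp (θ * I)‖ ≤ 1 ↔ |θ| ≤ π / 3 := by
  rw [norm_one_sub_le_one_iff (norm_exp_ofReal_mul_I θ), exp_ofReal_mul_I_re, half_le_cos_iff hθ]

theorem norm_sub_mul_of_norm_eq_one {x : ℂ} (hx : ‖x‖ = 1) (w : ℂ) : ‖x - x * w‖ = ‖1 - w‖ := by
  rw [← mul_one_sub, norm_mul, hx, one_mul]

abbrev IsoscelesConfig : Type := {p : ℂ × ℂ // ‖p.1‖ = 1 ∧ ‖p.2‖ = 1 ∧ ‖p.1 - p.2‖ ≤ 1}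

noncomputable def rotatedPair (q : Metric.sphere (0 : ℂ) 1 × Icc (-(π / 3)) (π / 3)) :
    IsoscelesConfig :=
  have hx : ‖(q.1 : ℂ)‖ = 1 := mem_sphere_zero_iff_norm.1 q.1.2
  have hθ : |(q.2 : ℝ)| ≤ π / 3 := abs_le.2 q.2.2
  ⟨(q.1, q.1 * exp (q.2 * I)), hx, by rw [norm_mul, hx, norm_exp_ofReal_mul_I, one_mul], by
    rw [norm_sub_mul_of_norm_eq_one hx,
      norm_one_sub_exp_mul_I_le_one_iff (hθ.trans (by linarith [pi_pos]))]
    exact hθ⟩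

theorem continuous_rotatedPair : Continuous rotatedPair :=
  Continuous.subtype_mk (by fun_prop) _

theorem rotatedPair_injective : Function.Injective rotatedPair := by
  rintro ⟨x, θ, hθ⟩ ⟨x', θ', hθ'⟩ h
  simp only [rotatedPair, Subtype.mk.injEq, Prod.mk.injEq] at h
  obtain ⟨hxx', hexp⟩ := h
  obtain rfl : x = x' := Subtype.ext hxx'
  have hx : (x : ℂ) ≠ 0 := ne_zero_of_mem_unit_sphere x
  have hIoc : ∀ {φ : ℝ}, φ ∈ Icc (-(π / 3)) (π / 3) → φ ∈ Ioc (-π) π := fun hφ ↦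
    ⟨by linarith [hφ.1, pi_pos], by linarith [hφ.2, pi_pos]⟩
  refine Prod.ext rfl (Subtype.ext ?_)
  calc θ = arg (exp (θ * I)) := (arg_exp_mul_I_of_mem_Ioc (hIoc hθ)).symm
    _ = arg (exp (θ' * I)) := by rw [mul_left_cancel₀ hx hexp]
    _ = θ' := arg_exp_mul_I_of_mem_Ioc (hIoc hθ')

theorem rotatedPair_surjective : Function.Surjective rotatedPair := by
  rintro ⟨⟨x, y⟩, hx, hy, hxy⟩
  have hx0 : x ≠ 0 := ne_zero_of_norm_ne_zero (hx ▸ one_ne_zero)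
  set z := y / x
  have hz : ‖z‖ = 1 := by rw [norm_div, hx, hy, div_one]
  have hexp : exp (arg z * I) = z := by
    simpa only [hz, ofReal_one, one_mul] using norm_mul_exp_arg_mul_I z
  have harg : |arg z| ≤ π / 3 := by
    rw [← norm_one_sub_exp_mul_I_le_one_iff (abs_arg_le_pi z), hexp,
      ← norm_sub_mul_of_norm_eq_one hx, mul_div_cancel₀ _ hx0]
    exact hxy
  refine ⟨(⟨x, mem_sphere_zero_iff_norm.2 hx⟩, ⟨arg z, abs_le.1 harg⟩), ?_⟩
  simp only [rotatedPair, hexp, z, mul_div_cancel₀ _ hx0]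

noncomputable def rotatedPairHomeomorph :
    Metric.sphere (0 : ℂ) 1 × Icc (-(π / 3)) (π / 3) ≃ₜ IsoscelesConfig :=
  continuous_rotatedPair.homeoOfEquivCompactToT2
    (f := .ofBijective _ ⟨rotatedPair_injective, rotatedPair_surjective⟩)

/-- The space `Q = {(x,y) ∈ S¹ × S¹ : |x−y| ≤ 1}` (with `S¹ ⊂ ℂ` the unit circle
with the Euclidean metric) is homeomorphic to the cylinder `S¹ × [0,1]`. -/
theorem config_space_isosceles_triangles_homeo_cylinder :
    Nonempty
      ({p : ℂ × ℂ // ‖p.1‖ = 1 ∧ ‖p.2‖ = 1 ∧ ‖p.1 - p.2‖ ≤ 1} ≃ₜ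
        (Metric.sphere (0 : ℂ) 1 × Set.Icc (0 : ℝ) 1)) :=
  ⟨rotatedPairHomeomorph.symm.trans
    ((Homeomorph.refl _).prodCongr (iccHomeoI _ _ (neg_lt_self (by positivity))))⟩
end

section
/- Let k be a field and consider the chain complex of k-vector spaces 0 → k³ →^d k³ → 0 → 0 in degrees 1,2,3,4, where d(a,b,c) = (a+b, a+c, b+c) and char k = 2. Then the cohomology in degree 2 is nonzero (it is one-dimensional). -/
/-- The sum-of-coordinates functional on `k³`. -/
def sumFun (k : Type) [Field k] : (Fin 3 → k) →ₗ[k] k where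
  toFun v := v 0 + v 1 + v 2
  map_add' v w := by simp [Pi.add_apply]; ring
  map_smul' c v := by simp [Pi.smul_apply]; ring

/-- Consider the chain complex of `k`-vector spaces `0 → k³ →d k³ → 0 → 0` in
degrees 1, 2, 3, 4, where `d (a,b,c) = (a+b, a+c, b+c)` and `char k = 2`. Since the
outgoing differential at degree 2 is zero, the cohomology in degree 2 is
`k³ / range d`; it is nonzero, being one-dimensional. -/
theorem cohomology_in_degree_two_nonzero (k : Type) [Field k] [CharP k 2]
    (d : (Fin 3 → k) →ₗ[k] (Fin 3 → k))
    (hd : ∀ v : Fin 3 → k, d v = ![v 0 + v 1, v 0 + v 2, v 1 + v 2]) :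
    Nontrivial ((Fin 3 → k) ⧸ LinearMap.range d) ∧
    Module.finrank k ((Fin 3 → k) ⧸ LinearMap.range d) = 1 := by
  have hrange : LinearMap.range d = LinearMap.ker (sumFun k) := by
    ext v
    constructor
    · rintro ⟨w, rfl⟩
      simp only [LinearMap.mem_ker, sumFun, LinearMap.coe_mk, AddHom.coe_mk, hd]
      show (w 0 + w 1) + (w 0 + w 2) + (w 1 + w 2) = 0
      have h2 : ∀ a : k, a + a = 0 := fun a => CharTwo.add_self_eq_zero a
      have : (w 0 + w 1) + (w 0 + w 2) + (w 1 + w 2)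
          = (w 0 + w 0) + (w 1 + w 1) + (w 2 + w 2) := by ring
      rw [this, h2, h2, h2]; simp [h2]
    · intro hv
      have hv' : v 0 + v 1 + v 2 = 0 := hv
      refine ⟨![v 1, v 2, 0], ?_⟩
      rw [hd]
      have h2 : ∀ a : k, a + a = 0 := fun a => CharTwo.add_self_eq_zero a
      have h01 : v 1 + v 2 = v 0 := by
        have : v 0 + (v 1 + v 2) = v 0 + v 0 := by
          rw [h2]; linear_combination hv'
        exact add_left_cancel this
      funext i
      fin_cases i <;> simp [h01]
  have hsurj : LinearMap.range (sumFun k) = ⊤ := by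
    rw [LinearMap.range_eq_top]
    intro c
    refine ⟨![c, 0, 0], ?_⟩
    simp [sumFun]
  have hkerrank : Module.finrank k (LinearMap.ker (sumFun k)) = 2 := by
    have h := LinearMap.finrank_range_add_finrank_ker (sumFun k)
    rw [hsurj] at h
    simp only [finrank_top, Module.finrank_self] at h
    have h3 : Module.finrank k (Fin 3 → k) = 3 := by simp
    omega
  have hq := Submodule.finrank_quotient_add_finrank (LinearMap.range d)
  rw [hrange] at hq ⊢
  rw [hkerrank] at hq
  have h3 : Module.finrank k (Fin 3 → k) = 3 := by simp
  have hone : Module.finrank k ((Fin 3 → k) ⧸ LinearMap.ker (sumFun k)) = 1 := by omega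
  refine ⟨?_, hone⟩
  have : 0 < Module.finrank k ((Fin 3 → k) ⧸ LinearMap.ker (sumFun k)) := by omega
  exact Module.nontrivial_of_finrank_pos this
end
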